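/- Let γ2 be a real number and let g be the 4-dimensional real Lie algebra with basis u1,u2,u3,u4 and only nonzero brackets [u2,u4] = −(γ2−1)·u3, [u3,u4] = (γ2+1)·u1, equipped with the Lorentzian inner product whose only nonzero components on the basis are ⟨u1,u2⟩ = ⟨u2,u1⟩ = 1, ⟨u3,u3⟩ = 1, ⟨u4,u4⟩ = 1. Then the left-invariant vector u1 is parallel, i.e. ∇_x u1 = 0 for every x ∈ g, and u1 is null (⟨u1,u1⟩ = 0); moreover R(x,y) = 0 for all x, y orthogonal to u1. -/
import Mathlib


namespace Stmt19

abbrev V : Type := Fin 4 → ℝ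

noncomputable def e (i : Fin 4) : V := fun j => if j = i then 1 else 0

noncomputable def br (g2 : ℝ) (x y : V) : V :=
  let A := x 0 * y 3 - x 3 * y 0
  let B := x 1 * y 3 - x 3 * y 1
  let C := x 2 * y 3 - x 3 * y 2
  let P := x 0 * y 1 - x 1 * y 0
  let Q := x 0 * y 2 - x 2 * y 0
  let R := x 1 * y 2 - x 2 * y 1
  ![(g2 + 1) * C, 0, -((g2 - 1) * B), 0]

noncomputable def ip (x y : V) : ℝ := x 0 * y 1 + x 1 * y 0 + x 2 * y 2 + x 3 * y 3

noncomputable def Rcurv (g2 : ℝ) (nabla : V → V → V) (z x y : V) : V :=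
  nabla (br g2 z x) y - nabla z (nabla x y) + nabla x (nabla z y)

noncomputable def rho (g2 : ℝ) (nabla : V → V → V) (x y : V) : ℝ :=
  ∑ i : Fin 4, Rcurv g2 nabla (e i) x y i

noncomputable def tau (Ric : V → V) : ℝ := ∑ i : Fin 4, Ric (e i) i

def IsDeriv (g2 : ℝ) (D : V → V) : Prop :=
  ∀ x y : V, D (br g2 x y) = br g2 (D x) y + br g2 x (D y)

lemma nabla_eq (g2 : ℝ) (nabla : V → V → V)
    (hKoszul : ∀ x y z : V, 2 * ip (nabla x y) z =
      ip (br g2 x y) z - ip (br g2 y z) x + ip (br g2 z x) y)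
    (x y : V) :
    nabla x y = ![x 2 * y 3 - g2 * x 3 * y 2, 0,
      x 1 * y 3 + g2 * x 3 * y 1, -(x 1 * y 2 + x 2 * y 1)] := by
  have h0 := hKoszul x y (e 1)
  have h1 := hKoszul x y (e 0)
  have h2 := hKoszul x y (e 2)
  have h3 := hKoszul x y (e 3)
  simp [ip, br, e] at h0 h1 h2 h3
  funext j
  fin_cases j <;> simp
  · linear_combination h0 / 2
  · linarith [h1]
  · linear_combination h2 / 2
  · linear_combination h3 / 2

theorem stmt_19 (g2 : ℝ)
    (nabla : V → V → V)
    (hKoszul : ∀ x y z : V, 2 * ip (nabla x y) z =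
      ip (br g2 x y) z - ip (br g2 y z) x + ip (br g2 z x) y)
    (Ric : V → V)
    (hRic : ∀ x y : V, ip (Ric x) y = rho g2 nabla x y) :
    (∀ x : V, nabla x (e 0) = 0) ∧ ip (e 0) (e 0) = 0 ∧
    (∀ x y : V, ip x (e 0) = 0 → ip y (e 0) = 0 → ∀ w : V, Rcurv g2 nabla x y w = 0) := by
  have hN := nabla_eq g2 nabla hKoszul
  refine ⟨?_, ?_, ?_⟩
  · intro x
    rw [hN]
    funext j
    fin_cases j <;> simp [e]
  · simp [ip, e]
  · intro x y hx hy w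
    simp [ip, e] at hx hy
    funext j
    have hb : br g2 x y = ![(g2+1) * (x 2 * y 3 - x 3 * y 2), 0, 0, 0] := by
      funext j; fin_cases j <;> simp [br, hx, hy]
    simp only [Rcurv, hN, hb]
    fin_cases j <;>
      simp [hx, hy, Matrix.cons_val_zero, Matrix.cons_val_one] <;> ring

end Stmt19
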